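/- arXiv:1907.13563 — 3 statements merged into one kernel-verified Lean document; each statement's English description precedes it below -/
import Mathlib

section
/- Define D(z) = r(-z)² - z·r(-z), where r(t) = φ(t)/Φ(t) is the standard normal inverse Mills ratio. Then 0 < D(z) < 1 for all real z. -/
noncomputable def phi (t : ℝ) : ℝ := (Real.sqrt (2 * Real.pi))⁻¹ * Real.exp (-t ^ 2 / 2)

noncomputable def Phi (t : ℝ) : ℝ := ∫ u in Set.Iic t, phi u

noncomputable def millsR (t : ℝ) : ℝ := phi t / Phi t

noncomputable def Dfun (z : ℝ) : ℝ := millsR (-z) ^ 2 - z * millsR (-z)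

/-!
Write `p = phi z` and `Q = Phi (-z)`, the upper tail. Then `Dfun z = p (p - z Q) / Q²`, so the
claim is `z Q < p` and `p² < Q (Q + z p)`. The functions `p - z Q`, `(1 + z²) Q - z p` and
`Q (Q + z p) - p²` all tend to `0` at `+∞` (since `Q ≤ p` for `z ≥ 1`), and their derivatives are
`-Q`, `-2 (p - z Q)` and `-p ((1 + z²) Q - z p)`. Hence each one is strictly decreasing, and so
positive, as soon as the previous one is positive.
-/

open Real MeasureTheory Filter Set Topology

lemma StrictAnti.lt_of_tendsto_atTop {α β : Type*} [LinearOrder α] [NoMaxOrder α]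
    [TopologicalSpace β] [Preorder β] [OrderClosedTopology β]
    {f : α → β} {a : β} (hf : StrictAnti f) (ha : Tendsto f atTop (𝓝 a)) (x : α) : a < f x := by
  obtain ⟨y, hy⟩ := exists_gt x
  exact (hf.antitone.le_of_tendsto ha y).trans_lt (hf hy)

lemma lt_of_hasDerivAt_neg_of_tendsto_atTop {f f' : ℝ → ℝ} {a : ℝ}
    (hf : ∀ x, HasDerivAt f (f' x) x) (hf' : ∀ x, f' x < 0) (ha : Tendsto f atTop (𝓝 a))
    (x : ℝ) : a < f x :=
  (strictAnti_of_hasDerivAt_neg hf hf').lt_of_tendsto_atTop ha x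

lemma phi_eq_gaussianPDFReal : phi = ProbabilityTheory.gaussianPDFReal 0 1 := by
  ext t
  simp [phi, ProbabilityTheory.gaussianPDFReal]

lemma phi_pos (t : ℝ) : 0 < phi t := by
  rw [phi_eq_gaussianPDFReal]
  exact ProbabilityTheory.gaussianPDFReal_pos _ _ _ one_ne_zero

lemma integrable_phi : Integrable phi := by
  rw [phi_eq_gaussianPDFReal]
  exact ProbabilityTheory.integrable_gaussianPDFReal _ _

lemma phi_neg (t : ℝ) : phi (-t) = phi t := by simp [phi]

lemma continuous_phi : Continuous phi := by
  unfold phi; fun_prop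

lemma hasDerivAt_phi (t : ℝ) : HasDerivAt phi (-t * phi t) t := by
  have h : HasDerivAt (fun s : ℝ => -s ^ 2 / 2) (-t) t :=
    ((hasDerivAt_pow 2 t).fun_neg.div_const 2).congr_deriv (by ring)
  exact (h.exp.const_mul _).congr_deriv (by simp only [phi]; ring)

lemma tendsto_pow_mul_phi_atTop (n : ℕ) : Tendsto (fun t => t ^ n * phi t) atTop (𝓝 0) := by
  have h := (rpow_mul_exp_neg_mul_sq_isLittleO_exp_neg (by norm_num : (0 : ℝ) < 1 / 2) n
    ).tendsto_zero_of_tendsto (tendsto_exp_atBot.comp <|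
      tendsto_id.const_mul_atTop_of_neg (by norm_num : -(1 / 2 : ℝ) < 0))
  convert h.const_mul (√(2 * π))⁻¹ using 2 with t
  · simp only [phi, rpow_natCast]; ring_nf
  · simp

lemma tendsto_phi_atBot : Tendsto phi atBot (𝓝 0) := by
  simpa [Function.comp_def, phi_neg] using
    (tendsto_pow_mul_phi_atTop 0).comp tendsto_neg_atBot_atTop

lemma Phi_pos (t : ℝ) : 0 < Phi t := by
  rw [Phi, setIntegral_pos_iff_support_of_nonneg_ae
    (.of_forall fun x => (phi_pos x).le) integrable_phi.integrableOn]
  simp [Function.support, (phi_pos _).ne']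

lemma hasDerivAt_Phi (t : ℝ) : HasDerivAt Phi (phi t) t := by
  have hPhi : ∀ s, Phi s = Phi 0 + ∫ u in (0 : ℝ)..s, phi u := fun s => by
    rw [Phi, Phi, ← intervalIntegral.integral_Iic_sub_Iic integrable_phi.integrableOn
      integrable_phi.integrableOn]
    ring
  rw [funext hPhi]
  exact (intervalIntegral.integral_hasDerivAt_right integrable_phi.intervalIntegrable
    (continuous_phi.stronglyMeasurableAtFilter _ _) continuous_phi.continuousAt).const_add _

lemma hasDerivAt_Phi_neg (z : ℝ) : HasDerivAt (fun z => Phi (-z)) (-phi z) z := by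
  simpa [phi_neg, Function.comp_def] using (hasDerivAt_Phi (-z)).comp z (hasDerivAt_neg z)

lemma integrable_mul_phi : Integrable fun u => u * phi u := by
  convert (integrable_mul_exp_neg_mul_sq (by norm_num : (0 : ℝ) < 1 / 2)).const_mul
    (√(2 * π))⁻¹ using 2 with u
  simp only [phi]; ring_nf

-- On `u ≤ -1` the density is dominated by `-u * phi u = phi'`, which integrates to `phi`.
lemma Phi_le_phi_of_le_neg_one {a : ℝ} (ha : a ≤ -1) : Phi a ≤ phi a := by
  have hint : Integrable fun u => -u * phi u := by
    simpa only [neg_mul] using integrable_mul_phi.fun_neg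
  have hderiv : ∫ u in Iic a, -u * phi u = phi a := by
    simpa using integral_Iic_of_hasDerivAt_of_tendsto continuous_phi.continuousWithinAt
      (fun x _ => hasDerivAt_phi x) hint.integrableOn tendsto_phi_atBot
  rw [Phi, ← hderiv]
  refine setIntegral_mono_on integrable_phi.integrableOn hint.integrableOn measurableSet_Iic
    fun u hu => ?_
  have : 1 ≤ -u := by linarith [mem_Iic.1 hu]
  nlinarith [phi_pos u]

lemma tendsto_pow_mul_Phi_neg_atTop (n : ℕ) :
    Tendsto (fun z => z ^ n * Phi (-z)) atTop (𝓝 0) := by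
  refine squeeze_zero' ?_ ?_ (tendsto_pow_mul_phi_atTop n)
  · filter_upwards [eventually_ge_atTop 0] with z hz
    exact mul_nonneg (pow_nonneg hz n) (Phi_pos _).le
  · filter_upwards [eventually_ge_atTop 1] with z hz
    have h := Phi_le_phi_of_le_neg_one (a := -z) (by linarith)
    rw [phi_neg] at h
    exact mul_le_mul_of_nonneg_left h (pow_nonneg (by linarith) n)

lemma mul_Phi_neg_lt_phi (z : ℝ) : z * Phi (-z) < phi z := by
  refine sub_pos.1 <| lt_of_hasDerivAt_neg_of_tendsto_atTop (f := fun z => phi z - z * Phi (-z))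
    (fun x => ?_) (fun x => neg_neg_of_pos (Phi_pos (-x))) ?_ z
  · exact ((hasDerivAt_phi x).sub ((hasDerivAt_id x).mul (hasDerivAt_Phi_neg x))).congr_deriv
      (by simp only [id]; ring)
  · simpa using (tendsto_pow_mul_phi_atTop 0).sub (tendsto_pow_mul_Phi_neg_atTop 1)

lemma mul_phi_lt_one_add_sq_mul_Phi_neg (z : ℝ) : z * phi z < (1 + z ^ 2) * Phi (-z) := by
  refine sub_pos.1 <| lt_of_hasDerivAt_neg_of_tendsto_atTop
    (f := fun z => (1 + z ^ 2) * Phi (-z) - z * phi z)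
    (f' := fun x => -2 * (phi x - x * Phi (-x)))
    (fun x => ?_) (fun x => mul_neg_of_neg_of_pos (by norm_num) (sub_pos.2 (mul_Phi_neg_lt_phi x)))
    ?_ z
  · exact ((((hasDerivAt_pow 2 x).const_add 1).mul (hasDerivAt_Phi_neg x)).sub
      ((hasDerivAt_id x).mul (hasDerivAt_phi x))).congr_deriv (by simp only [id]; ring)
  · simpa [add_mul] using ((tendsto_pow_mul_Phi_neg_atTop 0).add
      (tendsto_pow_mul_Phi_neg_atTop 2)).sub (tendsto_pow_mul_phi_atTop 1)

lemma phi_sq_lt_Phi_neg_mul_add (z : ℝ) : phi z ^ 2 < Phi (-z) * (Phi (-z) + z * phi z) := by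
  refine sub_pos.1 <| lt_of_hasDerivAt_neg_of_tendsto_atTop
    (f := fun z => Phi (-z) * (Phi (-z) + z * phi z) - phi z ^ 2)
    (f' := fun x => -phi x * ((1 + x ^ 2) * Phi (-x) - x * phi x))
    (fun x => ?_) (fun x => mul_neg_of_neg_of_pos (neg_neg_of_pos (phi_pos x))
      (sub_pos.2 (mul_phi_lt_one_add_sq_mul_Phi_neg x))) ?_ z
  · exact (((hasDerivAt_Phi_neg x).mul ((hasDerivAt_Phi_neg x).add
      ((hasDerivAt_id x).mul (hasDerivAt_phi x)))).sub
      ((hasDerivAt_phi x).pow 2)).congr_deriv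
      (by simp only [id, Pi.add_apply, Pi.mul_apply]; ring)
  · simpa using ((tendsto_pow_mul_Phi_neg_atTop 0).mul ((tendsto_pow_mul_Phi_neg_atTop 0).add
      (tendsto_pow_mul_phi_atTop 1))).sub ((tendsto_pow_mul_phi_atTop 0).pow 2)

/-- `0 < D z < 1` for all real `z`. -/
theorem Dfun_mem_Ioo (z : ℝ) : 0 < Dfun z ∧ Dfun z < 1 := by
  have hQ := Phi_pos (-z)
  have hD : Dfun z = phi z * (phi z - z * Phi (-z)) / Phi (-z) ^ 2 := by
    rw [Dfun, millsR, phi_neg]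
    field_simp
  rw [hD, div_lt_one (by positivity)]
  refine ⟨div_pos (mul_pos (phi_pos z) (sub_pos.2 (mul_Phi_neg_lt_phi z))) (by positivity), ?_⟩
  linarith [phi_sq_lt_Phi_neg_mul_add z]
end

section
/- The pMOM marginal prior density π_M(β) = C · β² / (1 + β²/(g b))^{(a+3)/2}, with C = 2Γ((a+3)/2)/(Γ(a/2)√π (bg)^{3/2}), has tails proportional to a Student-t density with a degrees of freedom when a = b: lim_{β→∞} π_M(β)/t(β; a) exists and is a finite positive constant, where t(·;a) is the Student-t density with a degrees of freedom. -/
/-!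
As `x → ∞`, `(1 + x / c) ^ s` behaves like `c ^ (-s) * x ^ s`. With `x = β ^ 2`, the pMOM kernel
has exponent `-((a + 3) / 2)`, exactly one less than the Student-t exponent `-((a + 1) / 2)`, so the
extra factor `β ^ 2` of `π_M` is cancelled and the ratio tends to a positive constant.
-/

open Real Filter Topology

theorem tendsto_one_add_div_rpow_div_rpow {c : ℝ} (hc : 0 < c) (s : ℝ) :
    Tendsto (fun x : ℝ => (1 + x / c) ^ s / x ^ s) atTop (𝓝 (c ^ (-s))) := by
  have hbase : Tendsto (fun x : ℝ => (1 + x / c) / x) atTop (𝓝 c⁻¹) := by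
    have h := tendsto_inv_atTop_zero.add_const c⁻¹
    rw [zero_add] at h
    refine h.congr' ?_
    filter_upwards [eventually_gt_atTop 0] with x hx
    field_simp
  have hlim := hbase.rpow_const (p := s) (Or.inl (inv_ne_zero hc.ne'))
  rw [inv_rpow hc.le, ← rpow_neg hc.le] at hlim
  refine hlim.congr' ?_
  filter_upwards [eventually_gt_atTop 0] with x hx
  exact div_rpow (by positivity) hx.le s

theorem tendsto_mul_one_add_div_rpow_div_one_add_div_rpow {c d : ℝ} (hc : 0 < c) (hd : 0 < d)
    (s : ℝ) :
    Tendsto (fun x : ℝ => x * (1 + x / c) ^ (-(s + 1)) / (1 + x / d) ^ (-s)) atTop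
      (𝓝 (c ^ (s + 1) / d ^ s)) := by
  have hlim := (tendsto_one_add_div_rpow_div_rpow hc (-(s + 1))).div
    (tendsto_one_add_div_rpow_div_rpow hd (-s)) (rpow_pos_of_pos hd _).ne'
  rw [neg_neg, neg_neg] at hlim
  refine hlim.congr' ?_
  filter_upwards [eventually_gt_atTop 0] with x hx
  have hpow : x ^ (-(s + 1)) = x ^ (-s) * x⁻¹ := by
    rw [neg_add, rpow_add hx, rpow_neg_one]
  have hxs : 0 < x ^ (-s) := rpow_pos_of_pos hx _
  rw [Pi.div_apply, hpow]
  field_simp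

/-- With `a = b`, the marginal pMOM prior density has tails proportional to a
Student-t density with `a` degrees of freedom: the ratio tends to a finite
positive constant as `β → ∞`. -/
theorem pMOM_marginal_student_tails
    (a g : ℝ) (ha : 0 < a) (hg : 0 < g)
    (C : ℝ) (hC : C = 2 * Real.Gamma ((a + 3) / 2) /
      (Real.Gamma (a / 2) * Real.sqrt Real.pi * (a * g) ^ ((3 : ℝ) / 2)))
    (piM : ℝ → ℝ)
    (hpiM : ∀ β : ℝ, piM β = C * β ^ 2 * (1 + β ^ 2 / (g * a)) ^ (-((a + 3) / 2)))
    (tdens : ℝ → ℝ)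
    (htdens : ∀ β : ℝ, tdens β = Real.Gamma ((a + 1) / 2) /
      (Real.sqrt (a * Real.pi) * Real.Gamma (a / 2)) *
        (1 + β ^ 2 / a) ^ (-((a + 1) / 2))) :
    ∃ L : ℝ, 0 < L ∧
      Filter.Tendsto (fun β => piM β / tdens β) Filter.atTop (nhds L) := by
  set s := (a + 1) / 2
  set K := Real.Gamma s / (Real.sqrt (a * Real.pi) * Real.Gamma (a / 2))
  have hΓ : ∀ x : ℝ, 0 < x → 0 < Real.Gamma x := fun x hx => Gamma_pos_of_pos hx
  have hCpos : 0 < C := by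
    rw [hC]
    have := hΓ ((a + 3) / 2) (by positivity)
    have := hΓ (a / 2) (by positivity)
    positivity
  have hKpos : 0 < K := by
    have := hΓ s (by positivity)
    have := hΓ (a / 2) (by positivity)
    positivity
  have hga : 0 < g * a := mul_pos hg ha
  refine ⟨C / K * ((g * a) ^ (s + 1) / a ^ s), by positivity, ?_⟩
  have hlim := ((tendsto_mul_one_add_div_rpow_div_one_add_div_rpow hga ha s).comp
    (tendsto_pow_atTop two_ne_zero)).const_mul (C / K)
  refine hlim.congr fun β => ?_
  have hexp : (a + 3) / 2 = s + 1 := by ring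
  simp only [Function.comp_apply, hpiM, htdens, hexp]
  ring
end

section
/- Let f(α, τ) = -(1/2)Σᵢ(τ yᵢ - xᵢᵀα)² + n₀ log τ on ℝ^p × (0,∞). If the design matrix X with rows xᵢᵀ has full column rank and n₀ ≥ 1, then f is strictly concave in (α, τ). -/
/-!
The quadratic part is `‖r(α, τ)‖²` for the linear residual map `r(α, τ)ᵢ = τ yᵢ - xᵢᵀ α`.
Since `r(α, τ)ᵢ` is the dot product of `(yᵢ, xᵢ)` with `(τ, -α)`, the spanning hypothesis makes
`r` injective, so the quadratic part is strictly convex; adding the concave `n₀ log τ` keeps the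
whole function strictly concave.
-/

open Matrix Set

section Convexity

variable {𝕜 E F β : Type*} [Semiring 𝕜] [PartialOrder 𝕜] [AddCommMonoid E] [AddCommMonoid F]
  [AddCommMonoid β] [PartialOrder β] [Module 𝕜 E] [Module 𝕜 F] [SMul 𝕜 β]

theorem StrictConvexOn.comp_linearMap {f : F → β} {s : Set F} (hf : StrictConvexOn 𝕜 s f)
    {g : E →ₗ[𝕜] F} (hg : Function.Injective g) : StrictConvexOn 𝕜 (g ⁻¹' s) (f ∘ g) :=
  ⟨hf.1.linear_preimage g, fun x hx y hy hxy a b ha hb hab => by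
    simpa only [Function.comp_apply, map_add, map_smul] using hf.2 hx hy (hg.ne hxy) ha hb hab⟩

end Convexity

theorem StrictConvexOn.const_mul {E : Type*} [AddCommMonoid E] [Module ℝ E] {s : Set E}
    {f : E → ℝ} (hf : StrictConvexOn ℝ s f) {c : ℝ} (hc : 0 < c) :
    StrictConvexOn ℝ s fun x => c * f x :=
  ⟨hf.1, fun x hx y hy hxy a b ha hb hab => by
    have h := mul_lt_mul_of_pos_left (hf.2 hx hy hxy ha hb hab) hc
    simp only [smul_eq_mul] at h ⊢
    linarith⟩

theorem strictConvexOn_univ_sum_sq {ι : Type*} [Fintype ι] :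
    StrictConvexOn ℝ univ fun w : ι → ℝ => ∑ i, w i ^ 2 := by
  refine ⟨convex_univ, fun u _ v _ huv a b ha hb hab => ?_⟩
  obtain ⟨j, hj⟩ := Function.ne_iff.mp huv
  have hgap : 0 < ∑ i, (u i - v i) ^ 2 :=
    Finset.sum_pos' (fun i _ => sq_nonneg _) ⟨j, Finset.mem_univ j, by
      simpa [sq_pos_iff, sub_eq_zero] using hj⟩
  have hsplit : a * ∑ i, u i ^ 2 + b * ∑ i, v i ^ 2 - ∑ i, (a * u i + b * v i) ^ 2
      = a * b * ∑ i, (u i - v i) ^ 2 := by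
    obtain rfl : b = 1 - a := by linarith
    simp only [Finset.mul_sum, ← Finset.sum_add_distrib, ← Finset.sum_sub_distrib]
    exact Finset.sum_congr rfl fun i _ => by ring
  simp only [Pi.add_apply, Pi.smul_apply, smul_eq_mul]
  nlinarith [mul_pos (mul_pos ha hb) hgap]

theorem eq_zero_of_forall_dotProduct_eq_zero_of_span_eq_top {R n : Type*} [CommSemiring R]
    [Fintype n] [DecidableEq n] {s : Set (n → R)} (hs : Submodule.span R s = ⊤) {w : n → R}
    (hw : ∀ v ∈ s, w ⬝ᵥ v = 0) : w = 0 :=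
  dotProduct_eq_zero w fun v => LinearMap.congr_fun
    (LinearMap.ext_on hs (f := dotProductEquiv R n w) (g := 0) fun v hv => hw v hv) v

section Residuals

variable {ι : Type*} {p : ℕ} (y : ι → ℝ) (x : ι → Fin p → ℝ)

def scaledResidual : (Fin p → ℝ) × ℝ →ₗ[ℝ] ι → ℝ where
  toFun q i := q.2 * y i - x i ⬝ᵥ q.1
  map_add' q r := by
    ext i; simp only [Prod.fst_add, Prod.snd_add, dotProduct_add, Pi.add_apply]; ring
  map_smul' c q := by
    ext i; simp only [Prod.smul_fst, Prod.smul_snd, dotProduct_smul, smul_eq_mul, Pi.smul_apply,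
      RingHom.id_apply]; ring

theorem scaledResidual_apply_eq_dotProduct (q : (Fin p → ℝ) × ℝ) (i : ι) :
    scaledResidual y x q i = (Fin.cons (y i) (x i) : Fin (p + 1) → ℝ) ⬝ᵥ vecCons q.2 (-q.1) := by
  change _ = vecCons _ _ ⬝ᵥ _
  rw [cons_dotProduct_cons, dotProduct_neg, mul_comm, ← sub_eq_add_neg]
  rfl

theorem scaledResidual_injective
    (hspan : Submodule.span ℝ
      (range (fun i => Fin.cons (y i) (x i) : ι → Fin (p + 1) → ℝ)) = ⊤) :
    Function.Injective (scaledResidual y x) := by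
  refine (injective_iff_map_eq_zero _).mpr fun q hq => ?_
  have hcons : vecCons q.2 (-q.1) = 0 := by
    refine eq_zero_of_forall_dotProduct_eq_zero_of_span_eq_top hspan ?_
    rintro _ ⟨i, rfl⟩
    rw [dotProduct_comm, ← scaledResidual_apply_eq_dotProduct, hq, Pi.zero_apply]
  rw [cons_eq_zero_iff, neg_eq_zero] at hcons
  exact Prod.ext hcons.2 hcons.1

end Residuals

theorem normalAFT_uncensored_strictConcave_general
    (n₀ p : ℕ) (y : Fin n₀ → ℝ) (x : Fin n₀ → (Fin p → ℝ))
    (hspan : Submodule.span ℝ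
      (Set.range (fun i : Fin n₀ => Fin.cons (y i) (x i) : Fin n₀ → (Fin (p + 1) → ℝ))) = ⊤) :
    StrictConcaveOn ℝ {q : (Fin p → ℝ) × ℝ | 0 < q.2}
      (fun q : (Fin p → ℝ) × ℝ =>
        (n₀ : ℝ) * Real.log q.2 - (1 / 2) * ∑ i, (q.2 * y i - x i ⬝ᵥ q.1) ^ 2) := by
  have hlog : ConcaveOn ℝ {q : (Fin p → ℝ) × ℝ | 0 < q.2} fun q => (n₀ : ℝ) * Real.log q.2 :=
    (strictConcaveOn_log_Ioi.concaveOn.comp_linearMap (LinearMap.snd ℝ _ ℝ)).smul n₀.cast_nonneg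
  have hsq : StrictConvexOn ℝ {q : (Fin p → ℝ) × ℝ | 0 < q.2}
      fun q => (1 / 2) * ∑ i, (q.2 * y i - x i ⬝ᵥ q.1) ^ 2 :=
    ((strictConvexOn_univ_sum_sq.comp_linearMap (scaledResidual_injective y x hspan)).const_mul
      one_half_pos).subset (subset_univ _) hlog.1
  exact hlog.sub_strictConvexOn hsq

/-- Strict concavity of the uncensored Normal AFT log-likelihood
`f(α, τ) = n₀ log τ - (1/2) Σᵢ (τ yᵢ - xᵢᵀ α)²` on `ℝ^p × (0, ∞)`,
provided the augmented vectors `(yᵢ, xᵢ)` span `ℝ^{p+1}`. -/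
theorem normalAFT_uncensored_strictConcave
    (n₀ p : ℕ) (hn₀ : 1 ≤ n₀) (y : Fin n₀ → ℝ) (x : Fin n₀ → (Fin p → ℝ))
    (hspan : Submodule.span ℝ
      (Set.range (fun i : Fin n₀ => Fin.cons (y i) (x i) : Fin n₀ → (Fin (p + 1) → ℝ))) = ⊤) :
    StrictConcaveOn ℝ {q : (Fin p → ℝ) × ℝ | 0 < q.2}
      (fun q : (Fin p → ℝ) × ℝ =>
        (n₀ : ℝ) * Real.log q.2 - (1 / 2) * ∑ i, (q.2 * y i - x i ⬝ᵥ q.1) ^ 2) :=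
  normalAFT_uncensored_strictConcave_general n₀ p y x hspan
end
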